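/- Let δ be a Young diagram of height < r and width strictly less than d − r + 1 (with 0 < r ≤ d), and let δ_K with K = d − r + 1 be the K-th diagram produced by the staircase algorithm with parameter r. Then deleting the first row and the first column from δ_K recovers δ; that is, (δ_K)^{i+1} − 1 = δ^i for all 1 ≤ i ≤ r − 1. -/

import Mathlib

/-- `colHt f j` : height of the `j`-th column (`j ≥ 1`) of the Young diagram with
0-indexed row lengths `f`, i.e. the number of rows of length at least `j`. -/
noncomputable def colHt (f : ℕ → ℕ) (j : ℕ) : ℕ := sInf {i | f i < j}

/-- Add boxes to column `k` so that rows `0,…,t-1` reach length at least `k`,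
i.e. the `k`-th column reaches height `t`. -/
def addCol (f : ℕ → ℕ) (k t : ℕ) : ℕ → ℕ :=
  fun i => if i < t then max (f i) k else f i

/-- The staircase algorithm with parameter `r` applied to a Young diagram `f` of
height `< r`: stage 1 adds boxes to the first column until it reaches height `r`;
stage `k ≥ 2` adds boxes to the `k`-th column until its height is one more than the
height of the `(k-1)`-th column of the starting diagram. `staircase r f k` is `δ_k`. -/
noncomputable def staircase (r : ℕ) (f : ℕ → ℕ) : ℕ → ℕ → ℕ
  | 0 => f
  | k + 1 => addCol (staircase r f k) (k + 1) (if k = 0 then r else colHt f k + 1)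

/-! Row `i + 1` of `δ_{m+1}` only grows at the stages `k ≤ f i + 1`, when the column height
target `colHt f (k - 1) + 1` exceeds `i + 1`; each such stage raises it to `k`. Hence
`δ_{m+1} (i + 1) = max (f (i + 1)) (min (f i) m + 1)`, which is `f i + 1` once `m ≥ f 0`. -/

lemma lt_colHt_iff {f : ℕ → ℕ} (hf : Antitone f) {k : ℕ} (hk : ∃ j, f j < k) (i : ℕ) :
    i < colHt f k ↔ k ≤ f i := by
  unfold colHt
  constructor
  · intro hi
    by_contra! hlt
    have : sInf {j | f j < k} ≤ i := Nat.sInf_le hlt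
    omega
  · intro hki
    by_contra! hle
    have hmem : f (sInf {j | f j < k}) < k := Nat.sInf_mem hk
    have := hf hle
    omega

lemma staircase_succ_apply_succ {r : ℕ} {f : ℕ → ℕ} (hf : Antitone f) (hzero : ∃ j, f j = 0)
    {i : ℕ} (hi : i + 1 < r) (m : ℕ) :
    staircase r f (m + 1) (i + 1) = max (f (i + 1)) (min (f i) m + 1) := by
  induction m with
  | zero => simp [staircase, addCol, hi]
  | succ m ih =>
    obtain ⟨j, hj⟩ := hzero
    have hcol := lt_colHt_iff hf ⟨j, by omega⟩ (k := m + 1) i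
    have hmono := hf (show i ≤ i + 1 by omega)
    rw [staircase, if_neg m.succ_ne_zero, addCol, ih]
    split_ifs <;> omega

theorem stmt6_general (d r : ℕ) (f : ℕ → ℕ)
    (hmono : ∀ i j, i ≤ j → f j ≤ f i)
    (hht : ∀ i, r - 1 ≤ i → f i = 0)
    (hwidth : f 0 < d - r + 1) :
    ∀ i, i < r - 1 → staircase r f (d - r + 1) (i + 1) = f i + 1 := by
  intro i hi
  have hf : Antitone f := hmono
  rw [staircase_succ_apply_succ hf ⟨r - 1, hht _ le_rfl⟩ (by omega) (d - r)]
  have := hf (Nat.zero_le i)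
  have := hf (show i ≤ i + 1 by omega)
  omega

/-- For `δ` of height `< r` and width `< d - r + 1` (with `0 < r ≤ d`), deleting
the first row and the first column from `δ_K` (`K = d - r + 1`) recovers `δ`:
in 0-indexed terms, `δ_K (i+1) = δ i + 1` for all `i < r - 1`. -/
theorem stmt6 (d r : ℕ) (f : ℕ → ℕ) (hr : 0 < r) (hrd : r ≤ d)
    (hmono : ∀ i j, i ≤ j → f j ≤ f i)
    (hht : ∀ i, r - 1 ≤ i → f i = 0)
    (hwidth : f 0 < d - r + 1) :
    ∀ i, i < r - 1 → staircase r f (d - r + 1) (i + 1) = f i + 1 :=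
  stmt6_general d r f hmono hht hwidth
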